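/- arXiv:1808.08611 — 2 statements merged into one kernel-verified Lean document; each statement's English description precedes it below -/
import Mathlib

section
/- (Coinvariant formulation of: for N ≥ 2, the quantum reflection group H_N^{∞+} is topologically generated by its quantum subgroups H_N^{s+} for finite s.) Let N ≥ 2, k ∈ ℕ and ε = (ε_1,…,ε_k) ∈ {1,*}^k. If a linear functional f : (ℂ^N)^{⊗k} → ℂ is (q_s(u), ε)-invariant in 𝒜(H_N^{s+}) for every integer s ≥ 1, then f is (u, ε)-invariant in 𝒜(H_N^{∞+}). -/
noncomputable section

/-- The defining relations of the quantum reflection group algebra `𝒜(H_N^{s+})`: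
each `u i j` is normal, the matrix `u` and its transpose are unitary, each
`p i j := u i j * (u i j)*` is idempotent and, when `s = some t` is finite,
`(u i j)^t = p i j`.  The value `s = none` encodes `s = ∞`, where the power relation
is omitted. -/
def IsReflection {N : ℕ} {A : Type} [Ring A] [Star A] (s : Option ℕ)
    (u : Fin N → Fin N → A) : Prop :=
  (∀ i j, u i j * star (u i j) = star (u i j) * u i j) ∧
  (∀ i j, ∑ k, u i k * star (u j k) = if i = j then 1 else 0) ∧
  (∀ i j, ∑ k, star (u k i) * u k j = if i = j then 1 else 0) ∧
  (∀ i j, ∑ k, star (u i k) * u j k = if i = j then 1 else 0) ∧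
  (∀ i j, ∑ k, u k i * star (u k j) = if i = j then 1 else 0) ∧
  (∀ i j, (u i j * star (u i j)) * (u i j * star (u i j)) = u i j * star (u i j)) ∧
  (∀ t : ℕ, s = some t → ∀ i j, u i j ^ t = u i j * star (u i j))

/-- The quantum reflection group algebra `𝒜(H_N^{s+})` (with `s = none` encoding
`s = ∞`), characterized (uniquely up to *-isomorphism) by its universal property. -/
structure QuantumReflection (N : ℕ) (s : Option ℕ) where
  carrier : Type
  [ringA : Ring carrier]
  [algA : Algebra ℂ carrier]
  [starA : StarRing carrier]
  [smodA : StarModule ℂ carrier]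
  u : Fin N → Fin N → carrier
  refl : IsReflection s u
  univ : ∀ (B : Type) [Ring B] [Algebra ℂ B] [StarRing B] [StarModule ℂ B]
      (v : Fin N → Fin N → B), IsReflection s v →
      ∃! φ : carrier →⋆ₐ[ℂ] B, ∀ i j, φ (u i j) = v i j

attribute [instance] QuantumReflection.ringA QuantumReflection.algA
  QuantumReflection.starA QuantumReflection.smodA

/-- The ordered product `g 0 * g 1 * ⋯ * g (k-1)` in a (noncommutative) monoid. -/
def ordProd {B : Type} [Monoid B] {k : ℕ} (g : Fin k → B) : B :=
  ((List.finRange k).map g).prod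

/-- `f`, encoding a linear functional on `(ℂ^N)^{⊗k}` via its values on the standard
basis, is `(v, ε)`-invariant, where `ε a = true` means the factor `v` and
`ε a = false` means the factor `star v`:
`∑_j f j • v_{j_1 i_1}^{ε_1} ⋯ v_{j_k i_k}^{ε_k} = f i • 1` for all `i`. -/
def IsStarInvariant {B : Type} [Ring B] [Algebra ℂ B] [Star B] {N k : ℕ}
    (v : Fin N → Fin N → B) (ε : Fin k → Bool) (f : (Fin k → Fin N) → ℂ) : Prop :=
  ∀ i : Fin k → Fin N,
    ∑ j : Fin k → Fin N,
      f j • ordProd (fun a => if ε a then v (j a) (i a) else star (v (j a) (i a))) =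
      f i • (1 : B)

/-! ### Auxiliary machinery -/

set_option linter.unusedSectionVars false
namespace TopGenAux

/-! #### Generalities -/

lemma isReflection_none_of_some {N : ℕ} {A : Type} [Ring A] [Star A] {s : ℕ}
    {u : Fin N → Fin N → A} (h : IsReflection (some s) u) : IsReflection none u :=
  ⟨h.1, h.2.1, h.2.2.1, h.2.2.2.1, h.2.2.2.2.1, h.2.2.2.2.2.1, fun t ht => by cases ht⟩

lemma ordProd_map {F B C : Type} [Monoid B] [Monoid C] [FunLike F B C] [MonoidHomClass F B C]
    {k : ℕ} (φ : F) (g : Fin k → B) :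
    φ (ordProd g) = ordProd fun a => φ (g a) := by
  unfold ordProd
  rw [map_list_prod φ, List.map_map]
  rfl

lemma isStarInvariant_comp {B C : Type} [Ring B] [Algebra ℂ B] [StarRing B]
    [Ring C] [Algebra ℂ C] [StarRing C] {N k : ℕ}
    (φ : B →⋆ₐ[ℂ] C) (v : Fin N → Fin N → B) (ε : Fin k → Bool) (f : (Fin k → Fin N) → ℂ)
    (h : IsStarInvariant v ε f) : IsStarInvariant (fun i j => φ (v i j)) ε f := by
  intro i
  have h2 := congrArg φ (h i)
  rw [map_sum, map_smul, map_one] at h2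
  rw [← h2]
  apply Finset.sum_congr rfl
  intro j _
  rw [map_smul]
  congr 1
  rw [ordProd_map φ]
  congr 1
  funext a
  by_cases hε : ε a <;> simp [hε, map_star]

lemma idem_pow {R : Type} [Monoid R] (p : R) (hp : p * p = p) : ∀ n : ℕ, p ^ (n + 1) = p
  | 0 => pow_one p
  | n + 1 => by rw [pow_succ, idem_pow p hp n, hp]

lemma list_pm_abs_le {α : Type} (g : α → ℤ) (hg : ∀ a, g a = 1 ∨ g a = -1) :
    ∀ l : List α, |(l.map g).sum| ≤ (l.length : ℤ)
  | [] => by simp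
  | a :: l => by
    rw [List.map_cons, List.sum_cons, List.length_cons]
    calc |g a + (l.map g).sum| ≤ |g a| + |(l.map g).sum| := abs_add_le _ _
      _ ≤ 1 + l.length := by
          have h1 : |g a| ≤ 1 := by rcases hg a with h | h <;> simp [h]
          have h2 := list_pm_abs_le g hg l
          omega
      _ = ((l.length + 1 : ℕ) : ℤ) := by push_cast; ring

lemma list_pm_sum_eq {α : Type} (P : α → Bool) (g : α → ℤ)
    (hg : ∀ a, g a = if P a then 1 else -1) :
    ∀ l : List α, (l.map g).sum = (l.countP P : ℤ) - (l.countP (fun a => ! P a) : ℤ)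
  | [] => by simp
  | a :: l => by
    rw [List.map_cons, List.sum_cons, list_pm_sum_eq P g hg l]
    by_cases h : P a
    · rw [List.countP_cons_of_pos (p := P) (a := a) (l := l) (by simpa using h),
        List.countP_cons_of_neg (p := fun a => ! P a) (a := a) (l := l) (by simpa using h), hg a, if_pos h]
      push_cast; ring
    · rw [List.countP_cons_of_neg (p := P) (a := a) (l := l) (by simpa using h),
        List.countP_cons_of_pos (p := fun a => ! P a) (a := a) (l := l) (by simpa using h), hg a, if_neg h]
      push_cast; ring

/-! #### The universal algebra at a finite level, as a quotient -/

section Quot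
variable {N : ℕ} (Q : QuantumReflection N none) (s : ℕ)

/-- relation imposing `u^s = u u*`, closed under star. -/
def qrel : Q.carrier → Q.carrier → Prop := fun a b =>
  ∃ i j, (a = Q.u i j ^ s ∧ b = Q.u i j * star (Q.u i j)) ∨
         (a = star (Q.u i j ^ s) ∧ b = star (Q.u i j * star (Q.u i j)))

lemma qrel_star : ∀ a b, qrel Q s a b → qrel Q s (star a) (star b) := by
  rintro a b ⟨i, j, ⟨h1, h2⟩ | ⟨h1, h2⟩⟩
  · exact ⟨i, j, Or.inr (by simp [h1, h2])⟩
  · exact ⟨i, j, Or.inl (by simp [h1, h2])⟩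

lemma mk_eq (a : Q.carrier) :
    RingQuot.mkAlgHom ℂ (qrel Q s) a = ⟨Quot.mk _ a⟩ := by
  simp [RingQuot.mkAlgHom_def, RingQuot.mkRingHom_def]

lemma star_mk (a : Q.carrier) :
    letI := RingQuot.starRing (qrel Q s) (qrel_star Q s)
    star (RingQuot.mkAlgHom ℂ (qrel Q s) a) = RingQuot.mkAlgHom ℂ (qrel Q s) (star a) := by
  rw [mk_eq, mk_eq]
  rfl

/-- The universal quantum reflection algebra at level `s`, constructed as a quotient of the
level-`∞` algebra. -/
def QsStruct : QuantumReflection N (some s) := by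
  letI sR := RingQuot.starRing (qrel Q s) (qrel_star Q s)
  letI sM : StarModule ℂ (RingQuot (qrel Q s)) := by
    constructor
    rintro c ⟨⟨a⟩⟩
    have h1 : (⟨Quot.mk _ a⟩ : RingQuot (qrel Q s)) = RingQuot.mkAlgHom ℂ _ a :=
      (mk_eq Q s a).symm
    rw [h1, ← map_smul, star_mk, star_mk, ← map_smul, star_smul]
  refine
  { carrier := RingQuot (qrel Q s)
    u := fun i j => RingQuot.mkAlgHom ℂ (qrel Q s) (Q.u i j)
    refl := ?_
    univ := ?_ }
  · obtain ⟨h1, h2, h3, h4, h5, h6, -⟩ := Q.refl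
    set mk := RingQuot.mkAlgHom ℂ (qrel Q s) with hmk
    have hst : ∀ a, star (mk a) = mk (star a) := star_mk Q s
    refine ⟨?_, ?_, ?_, ?_, ?_, ?_, ?_⟩
    · intro i j; rw [hst, ← map_mul, ← map_mul, h1]
    · intro i j
      simp only [hst, ← map_mul, ← map_sum, h2]
      split <;> simp
    · intro i j
      simp only [hst, ← map_mul, ← map_sum, h3]
      split <;> simp
    · intro i j
      simp only [hst, ← map_mul, ← map_sum, h4]
      split <;> simp
    · intro i j
      simp only [hst, ← map_mul, ← map_sum, h5]
      split <;> simp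
    · intro i j
      simp only [hst, ← map_mul, h6]
    · rintro t rfl'
      cases rfl'
      intro i j
      rw [hst, ← map_mul, ← map_pow]
      exact RingQuot.mkAlgHom_rel ℂ ⟨i, j, Or.inl ⟨rfl, rfl⟩⟩
  · intro B _ _ _ _ v hv
    obtain ⟨φ, hφ, huniq⟩ := Q.univ B v (isReflection_none_of_some hv)
    have hrel : ∀ ⦃x y⦄, qrel Q s x y → φ.toAlgHom x = φ.toAlgHom y := by
      rintro x y ⟨i, j, ⟨rfl, rfl⟩ | ⟨rfl, rfl⟩⟩
      · simp only [StarAlgHom.coe_toAlgHom, map_pow, map_mul, map_star, hφ]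
        exact hv.2.2.2.2.2.2 s rfl i j
      · simp only [StarAlgHom.coe_toAlgHom, map_star, map_pow, map_mul, hφ]
        rw [hv.2.2.2.2.2.2 s rfl i j]
    set ψ := RingQuot.liftAlgHom ℂ ⟨φ.toAlgHom, hrel⟩ with hψ
    have hψmk : ∀ a, ψ (RingQuot.mkAlgHom ℂ (qrel Q s) a) = φ a :=
      fun a => RingQuot.liftAlgHom_mkAlgHom_apply ℂ φ.toAlgHom hrel a
    have hψstar : ∀ x, ψ (star x) = star (ψ x) := by
      intro x
      obtain ⟨a, rfl⟩ := RingQuot.mkAlgHom_surjective ℂ (qrel Q s) x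
      rw [star_mk, hψmk, hψmk, map_star]
    refine ⟨⟨ψ, hψstar⟩, ?_, ?_⟩
    · intro i j
      exact (hψmk (Q.u i j)).trans (hφ i j)
    · intro Ψ hΨ
      have hcomp : ∀ a, Ψ (RingQuot.mkAlgHom ℂ (qrel Q s) a) = φ a := by
        let mkStar : Q.carrier →⋆ₐ[ℂ] RingQuot (qrel Q s) :=
          { RingQuot.mkAlgHom ℂ (qrel Q s) with
            map_star' := fun b => (star_mk Q s b).symm }
        have hχ : Ψ.comp mkStar = φ := huniq (Ψ.comp mkStar) (fun i j => hΨ i j)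
        intro a
        exact congrArg (fun (g : Q.carrier →⋆ₐ[ℂ] B) => g a) hχ
      apply StarAlgHom.ext
      intro x
      obtain ⟨a, rfl⟩ := RingQuot.mkAlgHom_surjective ℂ (qrel Q s) x
      show Ψ _ = ψ _
      rw [hcomp, hψmk]

end Quot

section SM


variable {s : ℕ} [NeZero s] {R : Type} [Ring R]

/-- cyclic weighted shift matrix: `(SM σ g)[x,y] = g y` if `x = y + σ`, else 0. -/
def SM (σ : ZMod s) (g : ZMod s → R) : Matrix (ZMod s) (ZMod s) R :=
  fun x y => if x = y + σ then g y else 0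

lemma SM_congr {σ : ZMod s} {g h : ZMod s → R} (H : ∀ y, g y = h y) : SM σ g = SM σ h := by
  unfold SM; funext x y; rw [H]

lemma SM_mul (σ τ : ZMod s) (g h : ZMod s → R) :
    SM σ g * SM τ h = SM (τ + σ) (fun y => g (y + τ) * h y) := by
  funext x y
  show (SM σ g * SM τ h) x y = _
  rw [Matrix.mul_apply]
  unfold SM
  rw [Finset.sum_eq_single (y + τ)]
  · rw [add_assoc]
    by_cases hx : x = y + (τ + σ) <;> simp [hx]
  · intro c _ hc
    rw [if_neg hc, mul_zero]
  · simp

lemma SM_star [StarRing R] (σ : ZMod s) (g : ZMod s → R) :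
    star (SM σ g) = SM (-σ) (fun y => star (g (y - σ))) := by
  funext x y
  show star (SM σ g y x) = _
  unfold SM
  have hiff : (y = x + σ) ↔ (x = y + -σ) := by
    constructor <;> intro h <;> [skip; rw [h]] <;> simp [h]
  by_cases h : y = x + σ
  · have h2 : x = y + -σ := hiff.mp h
    have h3 : y - σ = x := by rw [h]; ring
    rw [if_pos h, if_pos h2]
    show star (g x) = star (g (y - σ))
    rw [h3]
  · have h2 : ¬ (x = y + -σ) := fun hh => h (hiff.mpr hh)
    rw [if_neg h, if_neg h2, star_zero]

lemma SM_one : (1 : Matrix (ZMod s) (ZMod s) R) = SM 0 (fun _ => 1) := by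
  funext x y
  show (1 : Matrix (ZMod s) (ZMod s) R) x y = _
  rw [Matrix.one_apply]
  unfold SM
  simp [eq_comm]

lemma SM_zero (σ : ZMod s) : (0 : Matrix (ZMod s) (ZMod s) R) = SM σ (fun _ => 0) := by
  funext x y
  show (0 : Matrix (ZMod s) (ZMod s) R) x y = _
  unfold SM
  simp

lemma SM_sum {ι : Type} (t : Finset ι) (σ : ZMod s) (g : ι → ZMod s → R) :
    (∑ c ∈ t, SM σ (g c)) = SM σ (fun y => ∑ c ∈ t, g c y) := by
  funext x y
  rw [Matrix.sum_apply]
  unfold SM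
  by_cases h : x = y + σ <;> simp [h]

lemma SM_apply_shift (σ : ZMod s) (g : ZMod s → R) (y : ZMod s) :
    SM σ g (y + σ) y = g y := by
  unfold SM; simp

lemma SM_pow (g : ZMod s → R) (n : ℕ) :
    (SM 1 g) ^ n
      = SM (n : ZMod s) (fun y => ((List.range n).reverse.map (fun r : ℕ => g (y + (r : ZMod s)))).prod) := by
  induction n with
  | zero => simpa using SM_one
  | succ n ih =>
    rw [pow_succ', ih, SM_mul]
    have h1 : ((n : ZMod s) + 1) = ((n + 1 : ℕ) : ZMod s) := by push_cast; ring
    rw [h1]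
    apply SM_congr
    intro y
    have hrev : (List.range (n+1)).reverse = n :: (List.range n).reverse := by
      rw [List.range_succ, List.reverse_append]
      rfl
    rw [hrev, List.map_cons, List.prod_cons]

/-- the weight function of a product of shift matrices. -/
def PF {α : Type} (σ : α → ZMod s) (g : α → ZMod s → R) : List α → ZMod s → R
  | [], _ => 1
  | a :: l, y => g a (y + ((l.map σ).sum)) * PF σ g l y

/-- product of a list of shift matrices. -/
lemma SM_list_prod {α : Type} (σ : α → ZMod s) (g : α → ZMod s → R) :
    ∀ l : List α,
      (l.map (fun a => SM (σ a) (g a))).prod = SM ((l.map σ).sum) (PF σ g l)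
  | [] => by simpa [PF] using (SM_one (s := s) (R := R))
  | a :: l => by
    rw [List.map_cons, List.prod_cons, SM_list_prod σ g l, SM_mul]
    have h1 : ((l.map σ).sum + σ a) = (((a :: l).map σ).sum) := by
      rw [List.map_cons, List.sum_cons, add_comm]
    rw [h1]
    rfl

/-- evaluation of `PF` when we know each letter evaluates correctly. -/
lemma PF_eval {α : Type} (σ : α → ZMod s) (g : α → ZMod s → R) (L : α → R) (t : ZMod s) :
    ∀ l : List α,
      (∀ l1 a l2, l = l1 ++ a :: l2 → g a (t + ((l2.map σ).sum)) = L a) →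
      PF σ g l t = (l.map L).prod
  | [], _ => rfl
  | a :: l, H => by
    rw [List.map_cons, List.prod_cons]
    show g a (t + ((l.map σ).sum)) * PF σ g l t = _
    rw [H [] a l rfl, PF_eval σ g L t l (fun l1 b l2 hd => H (a :: l1) b l2 (by rw [hd]; rfl))]


end SM

section Count


variable {R : Type} [Ring R] [StarRing R]

/-- a product of commuting letters from `{x, star x}` sorts into powers. -/
lemma prod_pair_letters (x : R) (hn : x * star x = star x * x)
    {α : Type} (P : α → Bool) (F : α → R) (hF : ∀ a, F a = if P a then x else star x) :
    ∀ l : List α,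
      (l.map F).prod = x ^ (l.countP P) * (star x) ^ (l.countP (fun a => ! P a))
  | [] => by simp
  | a :: l => by
    rw [List.map_cons, List.prod_cons, prod_pair_letters x hn P F hF l]
    have hc0 : Commute (star x) x := hn.symm
    have hc : Commute (star x) (x ^ (l.countP P)) := hc0.pow_right _
    by_cases h : P a
    · rw [hF a, if_pos h, List.countP_cons_of_pos (p := P) (a := a) (l := l) (by simpa using h),
        List.countP_cons_of_neg (p := fun a => ! P a) (a := a) (l := l) (by simpa using h)]
      rw [← mul_assoc, ← pow_succ']
    · rw [hF a, if_neg h, List.countP_cons_of_neg (p := P) (a := a) (l := l) (by simpa using h),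
        List.countP_cons_of_pos (p := fun a => ! P a) (a := a) (l := l) (by simpa using h)]
      rw [← mul_assoc, hc.eq, mul_assoc, ← pow_succ']

variable {s : ℕ} [NeZero s]

lemma castnat_inj {r1 r2 : ℕ} (h1 : r1 < s) (h2 : r2 < s)
    (he : (r1 : ZMod s) = (r2 : ZMod s)) : r1 = r2 := by
  have := congrArg ZMod.val he
  rwa [ZMod.val_cast_of_lt h1, ZMod.val_cast_of_lt h2] at this

/-- counting small-`val` positions along a full cyclic orbit. -/
lemma count_positions (y : ZMod s) (m : ℕ) (hm : m ≤ s) :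
    ((List.range s).reverse.map (fun r : ℕ => y + (r : ZMod s))).countP
        (fun c => decide (c.val < m)) = m := by
  set P : ZMod s → Bool := fun c => decide (c.val < m) with hP
  set l : List (ZMod s) := (List.range s).reverse.map (fun r : ℕ => y + (r : ZMod s)) with hl
  set L0 : List (ZMod s) := (List.range s).map (fun r : ℕ => (r : ZMod s)) with hL0
  have hnodup : l.Nodup := by
    refine List.Nodup.map_on ?_ (by simp [List.nodup_range])
    intro r1 h1 r2 h2 he
    exact castnat_inj (by simpa using h1) (by simpa using h2) (add_left_cancel he)
  have hnodup0 : L0.Nodup := by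
    refine List.Nodup.map_on ?_ (List.nodup_range (n := s))
    intro r1 h1 r2 h2 he
    exact castnat_inj (by simpa using h1) (by simpa using h2) he
  have hmem : ∀ c : ZMod s, c ∈ l := by
    intro c
    rw [hl]
    refine List.mem_map.mpr ⟨(c - y).val, ?_, ?_⟩
    · simp [ZMod.val_lt]
    · rw [ZMod.natCast_val, ZMod.cast_id]
      ring
  have hmem0 : ∀ c : ZMod s, c ∈ L0 := by
    intro c
    rw [hL0]
    refine List.mem_map.mpr ⟨c.val, ?_, ?_⟩
    · simp [ZMod.val_lt]
    · rw [ZMod.natCast_val, ZMod.cast_id]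
  have hperm : l.Perm L0 :=
    (List.perm_ext_iff_of_nodup hnodup hnodup0).mpr (fun c => by simp [hmem c, hmem0 c])
  rw [hperm.countP_eq]
  rw [hL0, List.countP_map]
  have hcongr : ∀ r ∈ List.range s,
      ((P ∘ (fun r : ℕ => (r : ZMod s))) r = true ↔ decide (r < m) = true) := by
    intro r hr
    have : ((r : ZMod s)).val = r := ZMod.val_cast_of_lt (by simpa using hr)
    simp [hP, Function.comp, this]
  rw [List.countP_congr hcongr]
  -- countP (· < m) on range s is m
  have hsplit : s = m + (s - m) := by omega
  rw [hsplit, List.range_add, List.countP_append]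
  have c1 : (List.range m).countP (fun r => decide (r < m)) = m := by
    have h := (List.countP_eq_length (p := fun r => decide (r < m))
        (l := List.range m)).mpr (fun a ha => by simpa using List.mem_range.mp ha)
    rw [h, List.length_range]
  have c2 : ((List.range (s - m)).map (m + ·)).countP (fun r => decide (r < m)) = 0 := by
    rw [List.countP_eq_zero]
    intro a ha
    obtain ⟨b, -, rfl⟩ := List.mem_map.mp ha
    simp
  omega


end Count

section Scalar


lemma scalar_family (N s : ℕ) (hs : 1 ≤ s) (ζ : ℂ) (hζ : ζ ^ s = 1) (hζ1 : ζ * star ζ = 1) :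
    IsReflection (some s) (fun i j : Fin N => if i = j then ζ else 0) := by
  have hsum : ∀ (i j : Fin N) (w z : ℂ),
      ∑ k : Fin N, (if i = k then w else 0) * (if j = k then z else 0)
        = if i = j then w * z else 0 := by
    intro i j w z
    rw [Finset.sum_eq_single i]
    · by_cases h : i = j <;> simp [h, eq_comm]
    · intro c _ hc
      simp [Ne.symm hc]
    · simp
  have hstar : ∀ (i j : Fin N), star (if i = j then ζ else 0) = if i = j then star ζ else 0 := by
    intro i j; by_cases h : i = j <;> simp [h]
  refine ⟨?_, ?_, ?_, ?_, ?_, ?_, ?_⟩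
  · intro i j; ring
  · intro i j
    simp only [hstar]
    rw [hsum, hζ1]
  · intro i j
    simp only [hstar]
    have : ∀ k : Fin N, (if k = i then star ζ else 0) * (if k = j then ζ else 0)
        = (if i = k then star ζ else 0) * (if j = k then ζ else 0) := by
      intro k; simp [eq_comm]
    rw [Finset.sum_congr rfl (fun k _ => this k), hsum, mul_comm, hζ1]
  · intro i j
    simp only [hstar]
    rw [hsum, mul_comm, hζ1]
  · intro i j
    simp only [hstar]
    have : ∀ k : Fin N, (if k = i then ζ else 0) * (if k = j then star ζ else 0)
        = (if i = k then ζ else 0) * (if j = k then star ζ else 0) := by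
      intro k; simp [eq_comm]
    rw [Finset.sum_congr rfl (fun k _ => this k), hsum, hζ1]
  · intro i j
    have h2 : ζ * (starRingEnd ℂ) ζ = 1 := hζ1
    by_cases h : i = j <;> simp [h, h2]
  · rintro t ht i j
    cases ht
    have h2 : ζ * (starRingEnd ℂ) ζ = 1 := hζ1
    have h3 : (0:ℂ) ^ s = 0 := zero_pow (by omega)
    by_cases h : i = j <;> simp [h, h2, h3, hζ]


end Scalar

section MatrixFamily

variable {N : ℕ} (Q : QuantumReflection N none)

/-- the letter at position `c`: `u` on the first run, `star u` on the second. -/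
def Xf (m : ℕ) {s : ℕ} [NeZero s] (a b : Fin N) (y : ZMod s) : Q.carrier :=
  if y.val < m then Q.u a b else star (Q.u a b)

/-- the matrix model family: a cyclic weighted shift with letters `Xf`. -/
def VV (s m : ℕ) [NeZero s] : Fin N → Fin N → Matrix (ZMod s) (ZMod s) Q.carrier :=
  fun a b => SM 1 (Xf Q m a b)

variable (s m : ℕ) [NeZero s]

lemma Xf_mul_star (a b a' b' : Fin N) (y : ZMod s) :
    Xf Q m a b y * star (Xf Q m a' b' y)
      = if y.val < m then Q.u a b * star (Q.u a' b') else star (Q.u a b) * Q.u a' b' := by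
  unfold Xf
  by_cases h : y.val < m <;> simp [h]

lemma star_Xf_mul (a b a' b' : Fin N) (y : ZMod s) :
    star (Xf Q m a b y) * Xf Q m a' b' y
      = if y.val < m then star (Q.u a b) * Q.u a' b' else Q.u a b * star (Q.u a' b') := by
  unfold Xf
  by_cases h : y.val < m <;> simp [h]

lemma VV_mul_star (a b a' b' : Fin N) :
    VV Q s m a b * star (VV Q s m a' b')
      = SM 0 (fun y => Xf Q m a b (y - 1) * star (Xf Q m a' b' (y - 1))) := by
  unfold VV
  rw [SM_star, SM_mul, neg_add_cancel]
  apply SM_congr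
  intro y
  rw [← sub_eq_add_neg]

lemma star_VV_mul (a b a' b' : Fin N) :
    star (VV Q s m a b) * VV Q s m a' b'
      = SM 0 (fun y => star (Xf Q m a b y) * Xf Q m a' b' y) := by
  unfold VV
  rw [SM_star, SM_mul, add_neg_cancel]
  apply SM_congr
  intro y
  rw [add_sub_cancel_right]

lemma matrix_family (hm1 : 1 ≤ m) (h2m : s = 2 * m) :
    IsReflection (some s) (VV Q s m) := by
  obtain ⟨h1, h2, h3, h4, h5, h6, -⟩ := Q.refl
  have hmles : m ≤ s := by omega
  -- entrywise normality and projection value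
  have hnorm : ∀ (a b : Fin N) (y : ZMod s),
      Xf Q m a b y * star (Xf Q m a b y) = Q.u a b * star (Q.u a b) := by
    intro a b y
    rw [Xf_mul_star]
    split
    · rfl
    · exact (h1 a b).symm
  have hnorm' : ∀ (a b : Fin N) (y : ZMod s),
      star (Xf Q m a b y) * Xf Q m a b y = Q.u a b * star (Q.u a b) := by
    intro a b y
    rw [star_Xf_mul]
    split
    · exact (h1 a b).symm
    · rfl
  have hite : ∀ (c : Prop) [Decidable c],
      (if c then (1 : Matrix (ZMod s) (ZMod s) Q.carrier) else 0)
        = SM 0 (fun _ => if c then (1 : Q.carrier) else 0) := by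
    intro c hc
    by_cases h : c
    · rw [if_pos h, SM_one]
      apply SM_congr; intro y; rw [if_pos h]
    · rw [if_neg h, SM_zero 0]
      apply SM_congr; intro y; rw [if_neg h]
  refine ⟨?_, ?_, ?_, ?_, ?_, ?_, ?_⟩
  · intro a b
    rw [VV_mul_star, star_VV_mul]
    apply SM_congr
    intro y
    rw [hnorm, hnorm']
  · intro a b
    have hc : ∀ c : Fin N, VV Q s m a c * star (VV Q s m b c)
        = SM 0 (fun y => Xf Q m a c (y-1) * star (Xf Q m b c (y-1))) :=
      fun c => VV_mul_star Q s m a c b c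
    rw [Finset.sum_congr rfl (fun c _ => hc c), SM_sum, hite]
    apply SM_congr
    intro y
    by_cases h : (y - 1).val < m
    · have : ∀ c : Fin N, Xf Q m a c (y-1) * star (Xf Q m b c (y-1))
          = Q.u a c * star (Q.u b c) := fun c => by rw [Xf_mul_star, if_pos h]
      rw [Finset.sum_congr rfl (fun c _ => this c), h2]
    · have : ∀ c : Fin N, Xf Q m a c (y-1) * star (Xf Q m b c (y-1))
          = star (Q.u a c) * Q.u b c := fun c => by rw [Xf_mul_star, if_neg h]
      rw [Finset.sum_congr rfl (fun c _ => this c), h4]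
  · intro a b
    have hc : ∀ c : Fin N, star (VV Q s m c a) * VV Q s m c b
        = SM 0 (fun y => star (Xf Q m c a y) * Xf Q m c b y) :=
      fun c => star_VV_mul Q s m c a c b
    rw [Finset.sum_congr rfl (fun c _ => hc c), SM_sum, hite]
    apply SM_congr
    intro y
    by_cases h : y.val < m
    · have : ∀ c : Fin N, star (Xf Q m c a y) * Xf Q m c b y
          = star (Q.u c a) * Q.u c b := fun c => by rw [star_Xf_mul, if_pos h]
      rw [Finset.sum_congr rfl (fun c _ => this c), h3]
    · have : ∀ c : Fin N, star (Xf Q m c a y) * Xf Q m c b y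
          = Q.u c a * star (Q.u c b) := fun c => by rw [star_Xf_mul, if_neg h]
      rw [Finset.sum_congr rfl (fun c _ => this c), h5]
  · intro a b
    have hc : ∀ c : Fin N, star (VV Q s m a c) * VV Q s m b c
        = SM 0 (fun y => star (Xf Q m a c y) * Xf Q m b c y) :=
      fun c => star_VV_mul Q s m a c b c
    rw [Finset.sum_congr rfl (fun c _ => hc c), SM_sum, hite]
    apply SM_congr
    intro y
    by_cases h : y.val < m
    · have : ∀ c : Fin N, star (Xf Q m a c y) * Xf Q m b c y
          = star (Q.u a c) * Q.u b c := fun c => by rw [star_Xf_mul, if_pos h]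
      rw [Finset.sum_congr rfl (fun c _ => this c), h4]
    · have : ∀ c : Fin N, star (Xf Q m a c y) * Xf Q m b c y
          = Q.u a c * star (Q.u b c) := fun c => by rw [star_Xf_mul, if_neg h]
      rw [Finset.sum_congr rfl (fun c _ => this c), h2]
  · intro a b
    have hc : ∀ c : Fin N, VV Q s m c a * star (VV Q s m c b)
        = SM 0 (fun y => Xf Q m c a (y-1) * star (Xf Q m c b (y-1))) :=
      fun c => VV_mul_star Q s m c a c b
    rw [Finset.sum_congr rfl (fun c _ => hc c), SM_sum, hite]
    apply SM_congr
    intro y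
    by_cases h : (y - 1).val < m
    · have : ∀ c : Fin N, Xf Q m c a (y-1) * star (Xf Q m c b (y-1))
          = Q.u c a * star (Q.u c b) := fun c => by rw [Xf_mul_star, if_pos h]
      rw [Finset.sum_congr rfl (fun c _ => this c), h5]
    · have : ∀ c : Fin N, Xf Q m c a (y-1) * star (Xf Q m c b (y-1))
          = star (Q.u c a) * Q.u c b := fun c => by rw [Xf_mul_star, if_neg h]
      rw [Finset.sum_congr rfl (fun c _ => this c), h3]
  · intro a b
    rw [VV_mul_star]
    have hpv : SM (s := s) 0 (fun y => Xf Q m a b (y - 1) * star (Xf Q m a b (y - 1)))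
        = SM 0 (fun _ => Q.u a b * star (Q.u a b)) :=
      SM_congr (fun y => hnorm a b (y - 1))
    rw [hpv, SM_mul, add_zero]
    apply SM_congr
    intro y
    exact h6 a b
  · rintro t ht a b
    cases ht
    rw [VV_mul_star]
    have hVpow : VV Q s m a b = SM 1 (Xf Q m a b) := rfl
    rw [hVpow, SM_pow, ZMod.natCast_self]
    apply SM_congr
    intro y
    -- left side: product of all letters around the cycle
    have hmm : (List.range s).reverse.map (fun r : ℕ => Xf Q m a b (y + (r : ZMod s)))
        = ((List.range s).reverse.map (fun r : ℕ => y + (r : ZMod s))).map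
            (fun c => Xf Q m a b c) := by
      rw [List.map_map]
      rfl
    rw [hmm]
    set x : Q.carrier := Q.u a b with hx
    have hF : ∀ c : ZMod s, Xf Q m a b c
        = if (fun c : ZMod s => decide (c.val < m)) c then x else star x := by
      intro c
      unfold Xf
      by_cases h : c.val < m <;> simp [h, hx]
    rw [prod_pair_letters x (h1 a b) _ _ hF]
    have hcount1 := count_positions y m hmles
    rw [hcount1]
    have hlen : ((List.range s).reverse.map (fun r : ℕ => y + (r : ZMod s))).length = s := by
      simp
    have hcount2 : ((List.range s).reverse.map (fun r : ℕ => y + (r : ZMod s))).countP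
        (fun c => ! decide (c.val < m)) = m := by
      have h0 := List.length_eq_countP_add_countP (fun c : ZMod s => decide (c.val < m))
        (l := (List.range s).reverse.map (fun r : ℕ => y + (r : ZMod s)))
      have heq : ((List.range s).reverse.map (fun r : ℕ => y + (r : ZMod s))).countP
          (fun c => ! decide (c.val < m))
          = ((List.range s).reverse.map (fun r : ℕ => y + (r : ZMod s))).countP
            (fun c => decide ¬(decide (c.val < m) = true)) := by
        apply List.countP_congr
        intro c _
        by_cases h : c.val < m <;> simp [h]
      rw [heq]
      omega
    rw [hcount2]
    have hcomm : Commute x (star x) := h1 a b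
    rw [← hcomm.mul_pow]
    have hm' : m = (m - 1) + 1 := by omega
    rw [hnorm a b (y - 1), hm', idem_pow _ (h6 a b)]

end MatrixFamily

section WordEntry

variable {N k : ℕ} (Q : QuantumReflection N none)

/-- signed color: `+1` for a plain factor, `-1` for a starred factor. -/
def sigZ (ε : Fin k → Bool) : Fin k → ℤ := fun a => if ε a then 1 else -1

/-- total signed color count. -/
def Dint (ε : Fin k → Bool) : ℤ := ((List.finRange k).map (sigZ ε)).sum

lemma sigZ_pm (ε : Fin k → Bool) : ∀ a, sigZ ε a = 1 ∨ sigZ ε a = -1 := by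
  intro a
  by_cases h : ε a <;> simp [sigZ, h]

lemma cast_sig_sum (ε : Fin k → Bool) {s : ℕ} [NeZero s] (l : List (Fin k)) :
    (l.map (fun a => ((sigZ ε a : ℤ) : ZMod s))).sum = (((l.map (sigZ ε)).sum : ℤ) : ZMod s) := by
  have h := map_list_sum (Int.castRingHom (ZMod s)) (l.map (sigZ ε))
  rw [List.map_map] at h
  exact h.symm

lemma val_int_small {s : ℕ} [NeZero s] (z : ℤ) (h0 : 0 ≤ z) (hz : z < (s : ℤ)) :
    ((z : ZMod s)).val = z.toNat := by
  have h1 : ((z : ZMod s)) = ((z.toNat : ℕ) : ZMod s) := by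
    rw [← Int.toNat_of_nonneg h0]
    simp
  rw [h1, ZMod.val_cast_of_lt (by omega)]

lemma word_entry (ε : Fin k → Bool) (i j : Fin k → Fin N) (m s : ℕ) [NeZero s]
    (hm : m = 2 * k + 2) (h2m : s = 2 * m) :
    (ordProd (fun a => if ε a then VV Q s m (j a) (i a) else star (VV Q s m (j a) (i a))))
        (((k + 1 : ℕ) : ZMod s) + ((Dint ε : ℤ) : ZMod s)) ((k + 1 : ℕ) : ZMod s)
      = ordProd (fun a => if ε a then Q.u (j a) (i a) else star (Q.u (j a) (i a))) := by
  set t : ZMod s := ((k + 1 : ℕ) : ZMod s) with ht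
  set σ : Fin k → ZMod s := fun a => ((sigZ ε a : ℤ) : ZMod s) with hσ
  set g : Fin k → ZMod s → Q.carrier := fun a y =>
    if ε a then Xf Q m (j a) (i a) y else star (Xf Q m (j a) (i a) (y - 1)) with hg
  have hfact : ∀ a : Fin k,
      (if ε a then VV Q s m (j a) (i a) else star (VV Q s m (j a) (i a))) = SM (σ a) (g a) := by
    intro a
    by_cases h : ε a
    · rw [if_pos h]
      have h1 : σ a = 1 := by simp [hσ, sigZ, h]
      rw [h1]
      apply SM_congr
      intro y
      simp [hg, h]
    · rw [if_neg h]
      have h1 : σ a = -1 := by simp [hσ, sigZ, h]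
      rw [h1]
      have h2 : VV Q s m (j a) (i a) = SM 1 (Xf Q m (j a) (i a)) := rfl
      rw [h2, SM_star]
      apply SM_congr
      intro y
      simp [hg, h]
  have hword : ordProd (fun a => if ε a then VV Q s m (j a) (i a) else star (VV Q s m (j a) (i a)))
      = ((List.finRange k).map (fun a => SM (σ a) (g a))).prod := by
    unfold ordProd
    congr 1
    exact List.map_congr_left (fun a _ => hfact a)
  rw [hword, SM_list_prod]
  have hDz : ((List.finRange k).map σ).sum = ((Dint ε : ℤ) : ZMod s) := cast_sig_sum ε _
  rw [hDz, SM_apply_shift]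
  apply PF_eval
  intro l1 a l2 hsplit
  set S : ℤ := (l2.map (sigZ ε)).sum with hS
  have hlen : l2.length ≤ k := by
    have hlen0 := congrArg List.length hsplit
    rw [List.length_finRange, List.length_append, List.length_cons] at hlen0
    omega
  have habs0 : |S| ≤ (l2.length : ℤ) := list_pm_abs_le _ (sigZ_pm ε) l2
  have habs : -(k : ℤ) ≤ S ∧ S ≤ (k : ℤ) := by
    have h1 : |S| ≤ (k : ℤ) := le_trans habs0 (by exact_mod_cast hlen)
    exact abs_le.mp h1
  have hcast : (l2.map σ).sum = ((S : ℤ) : ZMod s) := cast_sig_sum ε l2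
  have htS : t + (l2.map σ).sum = ((((k : ℤ) + 1 + S) : ℤ) : ZMod s) := by
    rw [hcast, ht]
    rw [show (((k + 1 : ℕ) : ZMod s)) = (((k + 1 : ℤ)) : ZMod s) by push_cast; ring]
    rw [← Int.cast_add]
  by_cases h : ε a
  · rw [hg]
    simp only [h, if_pos, if_true]
    rw [htS]
    unfold Xf
    rw [val_int_small _ (by omega) (by omega)]
    rw [if_pos (by omega)]
  · rw [hg]
    simp only [h, if_neg, Bool.false_eq_true, if_false]
    rw [htS]
    have hsub : ((((k : ℤ) + 1 + S) : ℤ) : ZMod s) - 1 = ((((k : ℤ) + S) : ℤ) : ZMod s) := by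
      push_cast
      ring
    rw [hsub]
    unfold Xf
    rw [val_int_small _ (by omega) (by omega)]
    rw [if_pos (by omega)]

end WordEntry

end TopGenAux

/-- Coinvariant formulation of Lemma 2.10: for `N ≥ 2` the quantum reflection group
`H_N^{∞+}` is topologically generated by its quantum subgroups `H_N^{s+}` for finite
`s`.  (The canonical surjection `q_s : 𝒜(H_N^{∞+}) → 𝒜(H_N^{s+})` sends generators to
generators, so `(q_s(u), ε)`-invariance is invariance for the generator family of
`𝒜(H_N^{s+})`.) -/
theorem topGen_reflection_inf (N k : ℕ) (hN : 2 ≤ N) (ε : Fin k → Bool)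
    (Q : QuantumReflection N none)
    (f : (Fin k → Fin N) → ℂ)
    (hfin : ∀ s : ℕ, 1 ≤ s → ∀ Qs : QuantumReflection N (some s),
      IsStarInvariant Qs.u ε f) :
    IsStarInvariant Q.u ε f := by
  classical
  intro i
  set m : ℕ := 2 * k + 2 with hm
  set s : ℕ := 2 * m with h2m
  have hs1 : 1 ≤ s := by omega
  haveI : NeZero s := ⟨by omega⟩
  -- invariance holds for every concrete family satisfying the level-`s` relations
  have key : ∀ (B : Type) [Ring B] [Algebra ℂ B] [StarRing B] [StarModule ℂ B],
      ∀ v : Fin N → Fin N → B, IsReflection (some s) v → IsStarInvariant v ε f := by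
    intro B _ _ _ _ v hv
    obtain ⟨φ, hφ, -⟩ := (TopGenAux.QsStruct Q s).univ B v hv
    have h1 := hfin s hs1 (TopGenAux.QsStruct Q s)
    have h2 := TopGenAux.isStarInvariant_comp φ _ ε f h1
    have h3 : (fun a b => φ ((TopGenAux.QsStruct Q s).u a b)) = v := by
      funext a b; exact hφ a b
    rwa [h3] at h2
  set D : ℤ := TopGenAux.Dint ε with hDdef
  have habsD : |D| ≤ (k : ℤ) := by
    have h0 := TopGenAux.list_pm_abs_le _ (TopGenAux.sigZ_pm ε) (List.finRange k)
    simpa [hDdef, TopGenAux.Dint] using h0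
  have hndvd : D ≠ 0 → ¬ ((s : ℤ) ∣ D) := by
    intro hD0 hdvd
    have h1 : (s : ℤ) ≤ |D| := Int.le_of_dvd (abs_pos.mpr hD0) ((dvd_abs _ _).mpr hdvd)
    omega
  -- Step 1: if `D ≠ 0` then `f i = 0`, via the scalar family `ζ δ_{ab}`
  have hf0 : D ≠ 0 → f i = 0 := by
    intro hD0
    by_contra hfi
    set ζ : ℂ := Complex.exp (2 * Real.pi * Complex.I / s) with hζdef
    have hprim : IsPrimitiveRoot ζ s := Complex.isPrimitiveRoot_exp s (by omega)
    have hζs : ζ ^ s = 1 := hprim.pow_eq_one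
    have hζ0 : ζ ≠ 0 := Complex.exp_ne_zero _
    have hζstar : star ζ = ζ⁻¹ := by
      have h1 : (starRingEnd ℂ) ζ
          = Complex.exp ((starRingEnd ℂ) (2 * Real.pi * Complex.I / s)) :=
        (Complex.exp_conj _).symm
      have h2 : (starRingEnd ℂ) (2 * Real.pi * Complex.I / s)
          = -(2 * Real.pi * Complex.I / s) := by
        have harg : (2 * Real.pi * Complex.I / s) = ((2 * Real.pi / s : ℝ) : ℂ) * Complex.I := by
          push_cast
          ring
        rw [harg, map_mul, Complex.conj_ofReal, Complex.conj_I]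
        ring
      show (starRingEnd ℂ) ζ = ζ⁻¹
      rw [h1, h2, Complex.exp_neg]
    have hζ1 : ζ * star ζ = 1 := by rw [hζstar]; exact mul_inv_cancel₀ hζ0
    have hE := key ℂ (fun a b => if a = b then ζ else 0)
      (TopGenAux.scalar_family N s hs1 ζ hζs hζ1) i
    set T : ℕ := (List.finRange k).countP ε with hT
    set F : ℕ := (List.finRange k).countP (fun a => ! ε a) with hF
    have hLHS : ∑ j : Fin k → Fin N,
        f j • ordProd (fun a => if ε a then (if j a = i a then ζ else 0)
          else star (if j a = i a then ζ else 0))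
        = f i • (ζ ^ T * (star ζ) ^ F) := by
      rw [Finset.sum_eq_single i]
      · congr 1
        have hfun : (fun a => if ε a then (if i a = i a then ζ else 0)
            else star (if i a = i a then ζ else 0)) = (fun a => if ε a then ζ else star ζ) := by
          funext a
          by_cases h : ε a <;> simp [h]
        rw [hfun]
        exact TopGenAux.prod_pair_letters ζ (by ring) ε _ (fun a => rfl) (List.finRange k)
      · intro b _ hbi
        obtain ⟨a, hja⟩ := Function.ne_iff.mp hbi
        have hz : ordProd (fun a => if ε a then (if b a = i a then ζ else 0)
            else star (if b a = i a then ζ else 0)) = 0 := by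
          apply List.prod_eq_zero
          refine List.mem_map.mpr ⟨a, List.mem_finRange a, ?_⟩
          by_cases h : ε a <;> simp [h, hja]
        rw [hz, smul_zero]
      · intro h
        exact absurd (Finset.mem_univ i) h
    rw [hLHS] at hE
    have hone : ζ ^ T * (star ζ) ^ F = 1 := by
      have hE2 := hE
      rw [smul_eq_mul, smul_eq_mul] at hE2
      exact mul_left_cancel₀ hfi hE2
    have hzpow : ζ ^ ((T : ℤ) - (F : ℤ)) = 1 := by
      rw [zpow_sub₀ hζ0, zpow_natCast, zpow_natCast, div_eq_mul_inv, ← inv_pow, ← hζstar]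
      exact hone
    have hDTF : D = (T : ℤ) - (F : ℤ) :=
      TopGenAux.list_pm_sum_eq ε (TopGenAux.sigZ ε) (fun a => rfl) (List.finRange k)
    rw [← hDTF] at hzpow
    exact hndvd hD0 ((hprim.zpow_eq_one_iff_dvd D).mp hzpow)
  -- Step 2: the matrix family
  have hE2 := key (Matrix (ZMod s) (ZMod s) Q.carrier) (TopGenAux.VV Q s m)
      (TopGenAux.matrix_family Q s m (by omega) h2m) i
  set t : ZMod s := ((k + 1 : ℕ) : ZMod s) with ht
  set tD : ZMod s := t + ((D : ℤ) : ZMod s) with htD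
  have hentry := congrFun (congrFun hE2 tD) t
  have hLdone : ∑ j : Fin k → Fin N,
      f j • ordProd (fun a => if ε a then Q.u (j a) (i a) else star (Q.u (j a) (i a)))
      = (f i • (1 : Matrix (ZMod s) (ZMod s) Q.carrier)) tD t := by
    rw [← hentry]
    show _ = (∑ j : Fin k → Fin N, f j • ordProd fun a =>
      if ε a then TopGenAux.VV Q s m (j a) (i a)
      else star (TopGenAux.VV Q s m (j a) (i a))) tD t
    rw [Matrix.sum_apply]
    apply Finset.sum_congr rfl
    intro j _
    have hsm : (f j • ordProd fun a =>
        if ε a then TopGenAux.VV Q s m (j a) (i a)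
        else star (TopGenAux.VV Q s m (j a) (i a))) tD t
        = f j • ((ordProd fun a =>
        if ε a then TopGenAux.VV Q s m (j a) (i a)
        else star (TopGenAux.VV Q s m (j a) (i a))) tD t) := rfl
    rw [hsm, TopGenAux.word_entry Q ε i j m s hm h2m]
  by_cases hD : D = 0
  · have htt : tD = t := by rw [htD, hD]; simp
    rw [htt] at hLdone
    have hfinal : ((f i • (1 : Matrix (ZMod s) (ZMod s) Q.carrier)) t t) = f i • (1 : Q.carrier) := by
      have h1 : ((f i • (1 : Matrix (ZMod s) (ZMod s) Q.carrier)) t t)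
          = f i • ((1 : Matrix (ZMod s) (ZMod s) Q.carrier) t t) := rfl
      rw [h1, Matrix.one_apply_eq]
    rw [hLdone, hfinal]
  · have htt : tD ≠ t := by
      rw [htD]
      intro hcon
      have h0 : ((D : ℤ) : ZMod s) = 0 := add_eq_left.mp hcon
      exact hndvd hD ((ZMod.intCast_zmod_eq_zero_iff_dvd D s).mp h0)
    have hfinal : ((f i • (1 : Matrix (ZMod s) (ZMod s) Q.carrier)) tD t) = 0 := by
      have h1 : ((f i • (1 : Matrix (ZMod s) (ZMod s) Q.carrier)) tD t)
          = f i • ((1 : Matrix (ZMod s) (ZMod s) Q.carrier) tD t) := rfl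
      rw [h1, Matrix.one_apply_ne htt, smul_zero]
    rw [hf0 hD, zero_smul]
    exact hLdone.trans hfinal
end
end

section
/- The ℤ-linear map from the monoid algebra ℤ[FreeMonoid ℤ] into the product ∏_{s ≥ 1} ℤ[FreeMonoid (ℤ/sℤ)], whose s-th component is induced on basis elements by the monoid homomorphism FreeMonoid ℤ → FreeMonoid (ℤ/sℤ) reducing each letter modulo s, is injective. (This is the underlying content of the statement that the natural ring map R_∞ → lim_s R_s between the fusion rings of the quantum reflection groups H_N^{s+} is an embedding, since R_s has ℤ-basis indexed by the free monoid on ℤ/sℤ and the restriction maps send basis element x_f to x_{f mod s}.) -/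
/-!
Two elements of `ℤ[FreeMonoid ℤ]` have finite supports, so only finitely many letters occur in
them, all of absolute value at most some `M`. Reduction modulo `s = 2M + 1` is injective on such
letters, hence on the words of both supports, and a `mapDomain` that is injective there
separates the two elements.
-/

noncomputable section

/-- The ℤ-linear map `ℤ[FreeMonoid ℤ] → ℤ[FreeMonoid (ℤ/sℤ)]` induced on basis elements
by the monoid homomorphism reducing each letter modulo `s`. -/
def reduceMod (s : {s : ℕ // 1 ≤ s}) :
    MonoidAlgebra ℤ (FreeMonoid ℤ) →ₗ[ℤ] MonoidAlgebra ℤ (FreeMonoid (ZMod (s : ℕ))) :=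
  MonoidAlgebra.mapDomainLinearMap ℤ ℤ (FreeMonoid.map (fun n : ℤ => (n : ZMod (s : ℕ))))

theorem ZMod.intCast_injOn_natAbs_le {n M : ℕ} (h : 2 * M < n) :
    Set.InjOn (Int.cast : ℤ → ZMod n) {a | a.natAbs ≤ M} := by
  intro a (ha : a.natAbs ≤ M) b (hb : b.natAbs ≤ M) hab
  rw [ZMod.intCast_eq_intCast_iff_dvd_sub] at hab
  have hlt : |b - a| < n := by rw [abs_lt]; omega
  have := Int.eq_zero_of_abs_lt_dvd hab hlt
  omega

theorem List.map_injOn {α β : Type*} {f : α → β} {S : Set α} (hf : Set.InjOn f S) :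
    Set.InjOn (List.map f) {l | ∀ a ∈ l, a ∈ S} := by
  intro l₁ h₁ l₂ h₂ h
  induction l₁ generalizing l₂ with
  | nil => exact (List.map_eq_nil_iff.mp h.symm).symm
  | cons a t ih =>
    obtain _ | ⟨b, t₂⟩ := l₂
    · exact absurd h (List.cons_ne_nil _ _)
    simp only [List.map_cons, List.cons.injEq] at h
    rw [Set.mem_ofPred_eq, List.forall_mem_cons] at h₁ h₂
    rw [hf h₁.1 h₂.1 h.1, ih h₁.2 h₂.2 h.2]

theorem FreeMonoid.map_injOn {α β : Type*} {f : α → β} {S : Set α} (hf : Set.InjOn f S) :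
    Set.InjOn (FreeMonoid.map f) {w | ∀ a ∈ w.toList, a ∈ S} :=
  fun _ h₁ _ h₂ h => FreeMonoid.toList.injective (List.map_injOn hf h₁ h₂ (congrArg toList h))

theorem MonoidAlgebra.pi_mapDomainLinearMap_injective {R S M ι : Type*} {N : ι → Type*}
    [Semiring R] [Semiring S] [Module R S] (f : ∀ i, M → N i)
    (hf : ∀ t : Finset M, ∃ i, Set.InjOn (f i) t) :
    Function.Injective (LinearMap.pi fun i => mapDomainLinearMap R S (f i)) := by
  classical
  intro x y hxy
  obtain ⟨i, hi⟩ := hf (x.coeff.support ∪ y.coeff.support)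
  rw [Finset.coe_union] at hi
  exact coeff_injective <| Finsupp.mapDomain_injOn _ hi Set.subset_union_left
    Set.subset_union_right (congrArg coeff (congrFun hxy i))

theorem exists_reduceMod_injOn (t : Finset (FreeMonoid ℤ)) :
    ∃ s : {s : ℕ // 1 ≤ s}, Set.InjOn (FreeMonoid.map (fun n : ℤ => (n : ZMod (s : ℕ)))) t := by
  classical
  set M := (t.biUnion fun w => w.toList.toFinset).sup Int.natAbs
  have hletters : ∀ w ∈ t, ∀ a ∈ w.toList, a.natAbs ≤ M := fun w hw a ha =>
    Finset.le_sup (Finset.mem_biUnion.mpr ⟨w, hw, List.mem_toFinset.mpr ha⟩)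
  exact ⟨⟨2 * M + 1, by omega⟩, (FreeMonoid.map_injOn
    (ZMod.intCast_injOn_natAbs_le (n := 2 * M + 1) (by omega))).mono hletters⟩

/-- Lemma 2.4 of the paper: the natural map `R_∞ → lim_s R_s` between the fusion
rings of the quantum reflection groups `H_N^{s+}` is an embedding; concretely, the
ℤ-linear map from `ℤ[FreeMonoid ℤ]` into `∏_{s ≥ 1} ℤ[FreeMonoid (ℤ/sℤ)]` whose s-th
component reduces letters modulo `s` is injective. -/
theorem reduceMod_pi_injective :
    Function.Injective
      (LinearMap.pi reduceMod :
        MonoidAlgebra ℤ (FreeMonoid ℤ) →ₗ[ℤ]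
          ∀ s : {s : ℕ // 1 ≤ s}, MonoidAlgebra ℤ (FreeMonoid (ZMod (s : ℕ)))) :=
  MonoidAlgebra.pi_mapDomainLinearMap_injective _ exists_reduceMod_injOn

end
end
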